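/- arXiv:1712.03196 — 2 statements merged into one kernel-verified Lean document; each statement's English description precedes it below -/
import Mathlib

section
/- For all odd integers k, k' and every graph G, Ω_k(Ω_{k'}(G)) and Ω_{k·k'}(G) are homomorphically equivalent. -/
/-- A finite graph: symmetric edge relation, loops allowed. -/
structure FinGraph where
  V : Type
  Adj : V → V → Prop
  symm : ∀ {u v : V}, Adj u v → Adj v u
  [fin : Finite V]

attribute [instance] FinGraph.fin

/-- Existence of a graph homomorphism. -/
def FinGraph.Hom (G H : FinGraph) : Prop :=
  ∃ f : G.V → H.V, ∀ {u v : G.V}, G.Adj u v → H.Adj (f u) (f v)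

/-- Homomorphic equivalence. -/
def FinGraph.HomEquiv (G H : FinGraph) : Prop := G.Hom H ∧ H.Hom G

/-- Tensor (categorical) product of graphs. -/
def FinGraph.prod (G H : FinGraph) : FinGraph where
  V := G.V × H.V
  Adj := fun a b => G.Adj a.1 b.1 ∧ H.Adj a.2 b.2
  symm := fun h => ⟨G.symm h.1, H.symm h.2⟩

/-- A walk of length `n` from `u` to `v`. -/
def FinGraph.Walk (G : FinGraph) (n : ℕ) (u v : G.V) : Prop :=
  ∃ w : ℕ → G.V, w 0 = u ∧ w n = v ∧ ∀ i < n, G.Adj (w i) (w (i+1))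

/-- The `k`-th power graph `Γ_k(G)`. -/
def FinGraph.pow (G : FinGraph) (k : ℕ) : FinGraph where
  V := G.V
  Adj := fun u v => G.Walk k u v
  symm := by
    rintro u v ⟨w, h0, hk, hadj⟩
    refine ⟨fun i => w (k - i), by simpa using hk, by simpa using h0, fun i hi => ?_⟩
    have h1 : k - (i+1) + 1 = k - i := by omega
    have h2 := hadj (k - (i+1)) (by omega)
    rw [h1] at h2
    exact G.symm h2

/-- Raw vertices for the `k`-subdivision: original vertices plus internal path
vertices `(u,v,i)` with `uv` an edge and `0 < i < k`. -/
abbrev FinGraph.SubdivRaw (G : FinGraph) (k : ℕ) : Type :=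
  G.V ⊕ {p : G.V × G.V × Fin (k+1) // G.Adj p.1 p.2.1 ∧ 0 < p.2.2.val ∧ p.2.2.val < k}

/-- Identification `(u,v,i) ~ (v,u,k-i)` of internal vertices. -/
def FinGraph.subdivRel (G : FinGraph) (k : ℕ) : G.SubdivRaw k → G.SubdivRaw k → Prop :=
  fun a b => ∃ p q, a = Sum.inr p ∧ b = Sum.inr q ∧
    p.1.1 = q.1.2.1 ∧ p.1.2.1 = q.1.1 ∧ p.1.2.2.val + q.1.2.2.val = k

/-- Adjacency on raw subdivision vertices. -/
def FinGraph.subdivAdjRaw (G : FinGraph) (k : ℕ) : G.SubdivRaw k → G.SubdivRaw k → Prop := fun a b =>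
  match a, b with
  | .inl u, .inl v => k = 1 ∧ G.Adj u v
  | .inl u, .inr p => (p.1.1 = u ∧ p.1.2.2.val = 1) ∨ (p.1.2.1 = u ∧ p.1.2.2.val = k - 1)
  | .inr p, .inl u => (p.1.1 = u ∧ p.1.2.2.val = 1) ∨ (p.1.2.1 = u ∧ p.1.2.2.val = k - 1)
  | .inr p, .inr q =>
      (p.1.1 = q.1.1 ∧ p.1.2.1 = q.1.2.1 ∧
        (p.1.2.2.val + 1 = q.1.2.2.val ∨ q.1.2.2.val + 1 = p.1.2.2.val)) ∨
      (p.1.1 = q.1.2.1 ∧ p.1.2.1 = q.1.1 ∧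
        (p.1.2.2.val + q.1.2.2.val = k + 1 ∨ p.1.2.2.val + q.1.2.2.val = k - 1))

/-- The `k`-subdivision `Λ_k(G)`: every edge replaced by a path with `k` edges. -/
def FinGraph.subdiv (G : FinGraph) (k : ℕ) : FinGraph where
  V := Quot (G.subdivRel k)
  Adj := fun x y => ∃ a b, Quot.mk _ a = x ∧ Quot.mk _ b = y ∧
    (G.subdivAdjRaw k a b ∨ G.subdivAdjRaw k b a)
  symm := fun ⟨a, b, ha, hb, h⟩ => ⟨b, a, hb, ha, h.symm⟩

/-- `A` joined to `B`: every vertex of `A` adjacent to every vertex of `B`. -/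
def FinGraph.Join (G : FinGraph) (A B : Set G.V) : Prop := ∀ a ∈ A, ∀ b ∈ B, G.Adj a b

/-- Vertices of `Ω_{2ℓ+1}(G)`: tuples `(A_0, …, A_ℓ)` of vertex subsets with `A_0`
a singleton and `A_{i-1}` joined to `A_i`. -/
abbrev FinGraph.OmegaVert (G : FinGraph) (l : ℕ) : Type :=
  {A : Fin (l+1) → Set G.V //
    (∃ v, A 0 = {v}) ∧ ∀ i : Fin l, G.Join (A i.castSucc) (A i.succ)}

/-- The graph `Ω_{2ℓ+1}(G)`, right adjoint to the `(2ℓ+1)`-st power functor. -/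
def FinGraph.omega (G : FinGraph) (l : ℕ) : FinGraph where
  V := G.OmegaVert l
  Adj := fun A B =>
    (∀ i : Fin l, A.1 i.castSucc ⊆ B.1 i.succ ∧ B.1 i.castSucc ⊆ A.1 i.succ) ∧
    G.Join (A.1 (Fin.last l)) (B.1 (Fin.last l))
  symm := fun {A B} h =>
    ⟨fun i => ⟨(h.1 i).2, (h.1 i).1⟩, fun b hb a ha => G.symm (h.2 a ha b hb)⟩

/-- A multiplicative graph. -/
def FinGraph.Multiplicative (K : FinGraph) : Prop :=
  ∀ G H : FinGraph, (G.prod H).Hom K → G.Hom K ∨ H.Hom K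

/-- A (thin) graph functor. -/
def IsGraphFunctor (F : FinGraph → FinGraph) : Prop :=
  ∀ G H : FinGraph, G.Hom H → (F G).Hom (F H)

/-!
`Ω_{2l+1}` is right adjoint to the power functor `Γ_{2l+1}`, and `Γ_{k'} ∘ Γ_k = Γ_{k k'}` on the
nose, because a walk of length `n` in `Γ_k(X)` is the same as a walk of length `k n` in `X`. Hence
`Ω_k ∘ Ω_{k'}` and `Ω_{k k'}` are both right adjoint to `Γ_{k k'}`: a graph maps to one iff it maps
to the other, and testing this on the two graphs themselves gives homomorphisms both ways.
-/

namespace FinGraph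

variable {G : FinGraph} {m n : ℕ} {u v x : G.V}

lemma homEquiv_of_forall_hom_iff {H K : FinGraph} (h : ∀ X : FinGraph, X.Hom H ↔ X.Hom K) :
    H.HomEquiv K :=
  ⟨(h H).mp ⟨id, id⟩, (h K).mpr ⟨id, id⟩⟩

lemma Walk.symm (h : G.Walk n u v) : G.Walk n v u := (G.pow n).symm h

lemma walk_zero_iff : G.Walk 0 u v ↔ u = v := by
  constructor
  · rintro ⟨w, rfl, rfl, -⟩
    rfl
  · rintro rfl
    exact ⟨fun _ => u, rfl, rfl, by simp⟩

lemma walk_succ_iff : G.Walk (n + 1) u v ↔ ∃ z, G.Walk n u z ∧ G.Adj z v := by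
  constructor
  · rintro ⟨w, h0, hn, hw⟩
    exact ⟨w n, ⟨w, h0, rfl, fun i hi => hw i (by omega)⟩, hn ▸ hw n (by omega)⟩
  · rintro ⟨z, ⟨w, h0, hn, hw⟩, hzv⟩
    refine ⟨fun i => if i ≤ n then w i else v, by simp [h0], by simp, fun i hi => ?_⟩
    rcases Nat.lt_succ_iff_lt_or_eq.mp hi with hi | rfl
    · simpa [hi.le, Nat.succ_le_of_lt hi] using hw i hi
    · simpa [hn] using hzv

lemma walk_one_iff : G.Walk 1 u v ↔ G.Adj u v := by
  simp [walk_succ_iff, walk_zero_iff]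

lemma walk_add_iff : G.Walk (m + n) u x ↔ ∃ v, G.Walk m u v ∧ G.Walk n v x := by
  induction n generalizing x with
  | zero => simp [walk_zero_iff]
  | succ n ih =>
    simp only [← add_assoc, walk_succ_iff, ih]
    exact ⟨fun ⟨z, ⟨v, h₁, h₂⟩, h₃⟩ => ⟨v, h₁, z, h₂, h₃⟩,
      fun ⟨v, h₁, z, h₂, h₃⟩ => ⟨z, ⟨v, h₁, h₂⟩, h₃⟩⟩

lemma Walk.append (h₁ : G.Walk m u v) (h₂ : G.Walk n v x) : G.Walk (m + n) u x :=
  walk_add_iff.mpr ⟨v, h₁, h₂⟩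

/-- Going back and forth along an edge lengthens a walk by two. -/
lemma Walk.add_two_mul (h : G.Walk m u v) (hm : 0 < m) (t : ℕ) : G.Walk (m + 2 * t) u v := by
  obtain ⟨z, huz, -⟩ :=
    walk_add_iff.mp (show G.Walk (1 + (m - 1)) u v by rwa [Nat.add_sub_cancel' hm])
  have hback : G.Walk 2 u u := huz.append huz.symm
  induction t with
  | zero => exact h
  | succ t ih =>
    rw [Nat.mul_succ, ← add_assoc, add_comm]
    exact hback.append ih

lemma walk_pow_iff (k : ℕ) : (G.pow k).Walk n u v ↔ G.Walk (k * n) u v := by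
  induction n generalizing v with
  | zero => exact (walk_zero_iff (G := G.pow k)).trans walk_zero_iff.symm
  | succ n ih =>
    rw [Nat.mul_succ, walk_add_iff]
    exact (walk_succ_iff (G := G.pow k)).trans (exists_congr fun z => and_congr ih Iff.rfl)

lemma pow_pow_hom_iff {Y : FinGraph} (k k' : ℕ) :
    ((G.pow k).pow k').Hom Y ↔ (G.pow (k * k')).Hom Y :=
  ⟨fun ⟨f, hf⟩ => ⟨f, fun h => hf ((walk_pow_iff k).mpr h)⟩,
    fun ⟨f, hf⟩ => ⟨f, fun h => hf ((walk_pow_iff k).mp h)⟩⟩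

section Adjunction

variable {X Y : FinGraph} {l : ℕ}

def omegaLift (f : X.V → Y.V) (hf : ∀ {u v : X.V}, X.Walk (2 * l + 1) u v → Y.Adj (f u) (f v))
    (u : X.V) : (Y.omega l).V :=
  ⟨fun i => f '' {v | X.Walk i u v}, ⟨f u, by ext; simp [walk_zero_iff]⟩, by
    rintro i _ ⟨v, hv, rfl⟩ _ ⟨v', hv', rfl⟩
    have hw : X.Walk (i + (i + 1) + 2 * (l - i)) v v' :=
      (hv.symm.append hv').add_two_mul (by simp) _
    exact hf (by rwa [show i + (i + 1) + 2 * (l - i) = 2 * l + 1 by omega] at hw)⟩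

lemma omegaLift_adj (f : X.V → Y.V)
    (hf : ∀ {u v : X.V}, X.Walk (2 * l + 1) u v → Y.Adj (f u) (f v)) {u u' : X.V}
    (h : X.Adj u u') : (Y.omega l).Adj (omegaLift f hf u) (omegaLift f hf u') := by
  have step : ∀ {p q : X.V}, X.Adj p q → ∀ i : ℕ,
      f '' {v | X.Walk i q v} ⊆ f '' {v | X.Walk (i + 1) p v} := fun hpq i =>
    Set.image_mono fun v hv => add_comm 1 i ▸ (walk_one_iff.mpr hpq).append hv
  refine ⟨fun i => ⟨step (X.symm h) i, step h i⟩, ?_⟩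
  rintro _ ⟨v, hv, rfl⟩ _ ⟨v', hv', rfl⟩
  have hw : X.Walk (l + (1 + l)) v v' := hv.symm.append ((walk_one_iff.mpr h).append hv')
  exact hf (by rwa [show l + (1 + l) = 2 * l + 1 by omega] at hw)

lemma mem_omega_of_walk {g : X.V → (Y.omega l).V}
    (hg : ∀ {p q : X.V}, X.Adj p q → (Y.omega l).Adj (g p) (g q)) {y : Y.V} {u : X.V}
    (hy : y ∈ (g u).1 0) : ∀ {j : ℕ} (hj : j ≤ l) {v : X.V}, X.Walk j u v →
      y ∈ (g v).1 ⟨j, Nat.lt_succ_of_le hj⟩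
  | 0, _, _, h => walk_zero_iff.mp h ▸ hy
  | j + 1, hj, _, h => by
    obtain ⟨z, huz, hzv⟩ := walk_succ_iff.mp h
    exact ((hg hzv).1 ⟨j, hj⟩).1 (mem_omega_of_walk hg hy (by omega) huz)

theorem pow_hom_iff_hom_omega : (X.pow (2 * l + 1)).Hom Y ↔ X.Hom (Y.omega l) := by
  constructor
  · rintro ⟨f, hf⟩
    exact ⟨omegaLift (X := X) f hf, omegaLift_adj (X := X) f hf⟩
  · rintro ⟨g, hg⟩
    choose c hc using fun u => (g u).2.1
    have hcenter : ∀ u, c u ∈ (g u).1 0 := fun u => (hc u).symm ▸ rfl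
    refine ⟨c, fun {u u'} h => ?_⟩
    -- Split the walk `u ⇝ u'` at its middle edge `z z'`: the centre of `u` is carried to the last
    -- set of `g z`, that of `u'` to the last set of `g z'`, and these two sets are joined.
    obtain ⟨z, huz, hzu'⟩ := walk_add_iff.mp
      (show X.Walk (l + (1 + l)) u u' by rwa [show l + (1 + l) = 2 * l + 1 by omega])
    obtain ⟨z', hzz', hz'u'⟩ := walk_add_iff.mp hzu'
    exact (hg (walk_one_iff.mp hzz')).2 _ (mem_omega_of_walk hg (hcenter u) le_rfl huz)
      _ (mem_omega_of_walk hg (hcenter u') le_rfl hz'u'.symm)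

end Adjunction

end FinGraph

/-- `Ω_k(Ω_{k'}(G))` is homomorphically equivalent to `Ω_{k·k'}(G)`
for odd `k = 2a+1`, `k' = 2b+1` (so `k·k' = 2(2ab+a+b)+1`). -/
theorem omega_omega (G : FinGraph) (a b : ℕ) :
    ((G.omega b).omega a).HomEquiv (G.omega (2*a*b + a + b)) := by
  refine FinGraph.homEquiv_of_forall_hom_iff fun X => ?_
  rw [← FinGraph.pow_hom_iff_hom_omega, ← FinGraph.pow_hom_iff_hom_omega,
    FinGraph.pow_pow_hom_iff, show (2 * a + 1) * (2 * b + 1) = 2 * (2 * a * b + a + b) + 1 by ring,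
    FinGraph.pow_hom_iff_hom_omega]
end

section
/- If G is a square-free graph (A joined to B implies |A| ≤ 1 or |B| ≤ 1), then for every odd k the graphs Λ_k(G) and Ω_k(G) are homomorphically equivalent. -/
/-!
Colour `Λ_{2l+1}(G)` onto `G` by the parity of the distance along each subdivided edge, and send a
vertex `x` to the tuple whose `i`-th set consists of the colours of the vertices at walk distance
`i` from `x`. This is a homomorphism `Λ_{2l+1}(G) → Ω_{2l+1}(G)` for every `G`.

Conversely, call the depth of an `Ω`-vertex `A` the largest `p ≤ l` with `A_0, …, A_p` all
singletons. Send `A` to `A_0` if `p = 0`, and otherwise to the vertex at distance `p` on the path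
subdividing the edge `A_0 A_1`, counted from `A_0` or from `A_1` according to the parity of `p`.
Since `A_n ⊆ B_{n+1}` for adjacent `A`, `B`, their depths differ by at most one. If they are equal
to some `p < l`, then `A_{p+1}` and `B_{p+1}` are nonempty non-singletons, which square-freeness
forbids (through `A_{p+1} ⊆ B_{p+2}` and `B_{p+1} ⊴ B_{p+2}`, or through `A_l ⊴ B_l`); at depth `l`
the two images are the middle vertices of one path.
-/

namespace FinGraph

variable {G : FinGraph} {l : ℕ}

def nbhd (G : FinGraph) (u : G.V) : Set G.V := {w | G.Adj u w}

def SquareFree (G : FinGraph) : Prop :=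
  ∀ A B : Set G.V, G.Join A B → A.Subsingleton ∨ B.Subsingleton

lemma join_singleton_singleton {u v : G.V} (h : G.Adj u v) : G.Join {u} {v} := by
  rintro a rfl b rfl
  exact h

lemma join_singleton_nbhd (u : G.V) : G.Join {u} (G.nbhd u) := by
  rintro a rfl b hb
  exact hb

lemma join_nbhd_singleton (u : G.V) : G.Join (G.nbhd u) {u} := by
  rintro a ha b rfl
  exact G.symm ha

lemma singleton_subset_nbhd {u v : G.V} (h : G.Adj u v) : {v} ⊆ G.nbhd u :=
  Set.singleton_subset_iff.2 h

/-- With the vertex at distance `j` from `u` on the path subdividing `uv` coloured `u` or `v`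
according to the parity of `j`, this is the set of colours of the vertices reached from it by
walks of length `i`. -/
def edgeLayer (G : FinGraph) (l : ℕ) (u v : G.V) (j i : ℕ) : Set G.V :=
  if (i + j) % 2 = 0 then (if 2*l+1 ≤ i + j then G.nbhd v else {u})
  else (if j ≤ i then G.nbhd u else {v})

section edgeLayer

variable {u v : G.V} {j i : ℕ}

lemma edgeLayer_zero_eq_singleton (hj : j ≤ 2*l+1) : ∃ x, G.edgeLayer l u v j 0 = {x} := by
  unfold edgeLayer
  split_ifs
  exacts [absurd ‹_› (by omega), ⟨u, rfl⟩, absurd ‹_› (by omega), ⟨v, rfl⟩]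

lemma edgeLayer_join_succ (huv : j ≠ 0 → G.Adj u v) (hi : i < l) :
    G.Join (G.edgeLayer l u v j i) (G.edgeLayer l u v j (i+1)) := by
  unfold edgeLayer
  split_ifs <;>
    first
      | (exfalso; omega)
      | exact join_singleton_nbhd _
      | exact join_nbhd_singleton _
      | exact join_singleton_singleton (huv (by omega))
      | exact join_singleton_singleton (G.symm (huv (by omega)))

lemma edgeLayer_subset_succ_succ (huv : G.Adj u v) (hi : i < l) :
    G.edgeLayer l u v j i ⊆ G.edgeLayer l u v (j+1) (i+1) := by
  unfold edgeLayer
  split_ifs <;>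
    first
      | (exfalso; omega)
      | exact subset_rfl
      | exact singleton_subset_nbhd huv
      | exact singleton_subset_nbhd (G.symm huv)

lemma edgeLayer_succ_subset_succ (huv : G.Adj u v) (hi : i < l) :
    G.edgeLayer l u v (j+1) i ⊆ G.edgeLayer l u v j (i+1) := by
  unfold edgeLayer
  split_ifs <;>
    first
      | (exfalso; omega)
      | exact subset_rfl
      | exact singleton_subset_nbhd huv

lemma edgeLayer_join_succ_last (huv : G.Adj u v) :
    G.Join (G.edgeLayer l u v j l) (G.edgeLayer l u v (j+1) l) := by
  unfold edgeLayer
  split_ifs <;>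
    first
      | (exfalso; omega)
      | exact join_singleton_nbhd _
      | exact join_nbhd_singleton _
      | exact join_singleton_singleton huv

lemma edgeLayer_swap (hj : j ≤ 2*l+1) :
    G.edgeLayer l u v j i = G.edgeLayer l v u (2*l+1 - j) i := by
  unfold edgeLayer
  split_ifs <;> first | rfl | (exfalso; omega)

lemma edgeLayer_zero_left (w : G.V) (hi : i ≤ l) :
    G.edgeLayer l u v 0 i = G.edgeLayer l u w 0 i := by
  unfold edgeLayer
  split_ifs <;> first | rfl | (exfalso; omega)

end edgeLayer

/-- For `j = 0` this is the original vertex `u`, whatever `v` is. -/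
def layerPoint (G : FinGraph) (l : ℕ) {u v : G.V} (j : Fin (2*l+2)) (huv : j ≠ 0 → G.Adj u v) :
    G.OmegaVert l :=
  ⟨fun i => G.edgeLayer l u v j i, edgeLayer_zero_eq_singleton (by omega),
    fun i => edgeLayer_join_succ (fun h => huv (Fin.ne_of_val_ne h)) i.2⟩

section layerPoint

variable {u v : G.V}

lemma layerPoint_rev (j : Fin (2*l+2)) (huv : j ≠ 0 → G.Adj u v) (hvu : j.rev ≠ 0 → G.Adj v u) :
    G.layerPoint l j huv = G.layerPoint l j.rev hvu :=
  Subtype.ext <| funext fun _ => by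
    simp only [layerPoint, Fin.val_rev]
    rw [edgeLayer_swap (by omega : (j : ℕ) ≤ 2*l+1)]
    congr 1
    omega

lemma layerPoint_zero_left (w : G.V) (huv : (0 : Fin (2*l+2)) ≠ 0 → G.Adj u v)
    (huw : (0 : Fin (2*l+2)) ≠ 0 → G.Adj u w) :
    G.layerPoint l 0 huv = G.layerPoint l 0 huw :=
  Subtype.ext <| funext fun i => edgeLayer_zero_left w (Nat.lt_succ_iff.1 i.2)

lemma layerPoint_adj (huv : G.Adj u v) {j j' : Fin (2*l+2)} (hjj' : (j : ℕ) + 1 = j') :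
    (G.omega l).Adj (G.layerPoint l j fun _ => huv) (G.layerPoint l j' fun _ => huv) := by
  obtain ⟨j', hj'⟩ := j'
  subst hjj'
  refine ⟨fun i => ⟨edgeLayer_subset_succ_succ huv i.2, edgeLayer_succ_subset_succ huv i.2⟩,
    edgeLayer_join_succ_last huv⟩

end layerPoint

def subdivRawToOmega (G : FinGraph) (l : ℕ) : G.SubdivRaw (2*l+1) → G.OmegaVert l
  | .inl u => G.layerPoint l (u := u) (v := u) 0 fun h => absurd rfl h
  | .inr p => G.layerPoint l p.1.2.2 fun _ => p.2.1

lemma subdivRawToOmega_eq_of_rel {a b : G.SubdivRaw (2*l+1)} (h : G.subdivRel (2*l+1) a b) :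
    G.subdivRawToOmega l a = G.subdivRawToOmega l b := by
  obtain ⟨⟨⟨u, v, j⟩, huv, _⟩, ⟨⟨v', u', j'⟩, _⟩, rfl, rfl, hu, hv, hjj'⟩ := h
  dsimp only at hu hv hjj'
  subst hu hv
  obtain rfl : j' = j.rev := Fin.ext (by rw [Fin.val_rev]; omega)
  exact layerPoint_rev _ (fun _ => huv) (fun _ => G.symm huv)

lemma subdivRawToOmega_inl_adj_layerPoint {u v : G.V} (huv : G.Adj u v) {j : Fin (2*l+2)}
    (hj : (j : ℕ) = 1) :
    (G.omega l).Adj (G.subdivRawToOmega l (.inl u)) (G.layerPoint l j fun _ => huv) := by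
  rw [subdivRawToOmega, layerPoint_zero_left v _ fun _ => huv]
  exact layerPoint_adj huv (by rw [hj]; rfl)

lemma subdivRawToOmega_adj_inl_inr (u : G.V) (p : {p : G.V × G.V × Fin (2*l+2) //
      G.Adj p.1 p.2.1 ∧ 0 < p.2.2.val ∧ p.2.2.val < 2*l+1}) :
    G.subdivAdjRaw (2*l+1) (.inl u) (.inr p) →
    (G.omega l).Adj (G.subdivRawToOmega l (.inl u)) (G.subdivRawToOmega l (.inr p)) := by
  obtain ⟨⟨v, w, j⟩, hvw, -⟩ := p
  rintro (⟨rfl, hj⟩ | ⟨rfl, hj⟩)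
  · exact subdivRawToOmega_inl_adj_layerPoint hvw hj
  · change (G.omega l).Adj _ (G.layerPoint l j fun _ => hvw)
    rw [layerPoint_rev _ _ fun _ => G.symm hvw]
    exact subdivRawToOmega_inl_adj_layerPoint (G.symm hvw)
      (by simp only [Fin.val_rev] at hj ⊢; omega)

lemma subdivRawToOmega_adj {a b : G.SubdivRaw (2*l+1)} (h : G.subdivAdjRaw (2*l+1) a b) :
    (G.omega l).Adj (G.subdivRawToOmega l a) (G.subdivRawToOmega l b) := by
  rcases a with u | p <;> rcases b with w | q
  · obtain ⟨hl, huw⟩ := h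
    obtain rfl : l = 0 := by omega
    refine ⟨fun i => i.elim0, ?_⟩
    simpa [subdivRawToOmega, layerPoint, edgeLayer] using join_singleton_singleton huw
  · exact subdivRawToOmega_adj_inl_inr u q h
  · exact (G.omega l).symm (subdivRawToOmega_adj_inl_inr w p h)
  · revert h
    obtain ⟨⟨u, v, j⟩, huv, -⟩ := p
    obtain ⟨⟨w, x, j'⟩, hwx, -⟩ := q
    rintro (⟨rfl, rfl, h | h⟩ | ⟨rfl, rfl, h⟩)
    · exact layerPoint_adj huv h
    · exact (G.omega l).symm (layerPoint_adj huv h)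
    · rw [subdivRawToOmega, subdivRawToOmega, layerPoint_rev j' _ fun _ => huv]
      dsimp only at h
      rcases h with h | h
      · exact (G.omega l).symm (layerPoint_adj huv (by simp only [Fin.val_rev]; omega))
      · exact layerPoint_adj huv (by simp only [Fin.val_rev]; omega)

theorem subdiv_hom_omega (G : FinGraph) (l : ℕ) : (G.subdiv (2*l+1)).Hom (G.omega l) := by
  refine ⟨Quot.lift (G.subdivRawToOmega l) fun _ _ => subdivRawToOmega_eq_of_rel, ?_⟩
  rintro _ _ ⟨a, b, rfl, rfl, h | h⟩
  · exact subdivRawToOmega_adj h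
  · exact (G.omega l).symm (subdivRawToOmega_adj h)

end FinGraph

namespace FinGraph.OmegaVert

variable {G : FinGraph} {l : ℕ} {A B : G.OmegaVert l} {n : ℕ}

open Classical

def part (A : G.OmegaVert l) (n : ℕ) : Set G.V :=
  if h : n ≤ l then A.1 ⟨n, Nat.lt_succ_of_le h⟩ else ∅

lemma part_of_le (A : G.OmegaVert l) (h : n ≤ l) : A.part n = A.1 ⟨n, Nat.lt_succ_of_le h⟩ :=
  dif_pos h

lemma exists_part_zero_eq_singleton (A : G.OmegaVert l) : ∃ x, A.part 0 = {x} := by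
  rw [part_of_le A l.zero_le]
  exact A.2.1

lemma join_part_succ (A : G.OmegaVert l) (hn : n < l) : G.Join (A.part n) (A.part (n+1)) := by
  rw [part_of_le A hn.le, part_of_le A hn]
  exact A.2.2 ⟨n, hn⟩

lemma part_subset_part_succ (hAB : (G.omega l).Adj A B) (hn : n < l) :
    A.part n ⊆ B.part (n+1) := by
  rw [part_of_le A hn.le, part_of_le B hn]
  exact (hAB.1 ⟨n, hn⟩).1

lemma join_part_last (hAB : (G.omega l).Adj A B) : G.Join (A.part l) (B.part l) := by
  rw [part_of_le A le_rfl, part_of_le B le_rfl]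
  exact hAB.2

lemma part_nonempty_of_adj (hAB : (G.omega l).Adj A B) (hn : n ≤ l) : (A.part n).Nonempty := by
  induction n using Nat.strong_induction_on generalizing A B with
  | _ n ih =>
    match n, hn with
    | 0, _ => exact (A.exists_part_zero_eq_singleton.choose_spec ▸ Set.singleton_nonempty _)
    | 1, hn =>
      exact (ih 0 (by omega) ((G.omega l).symm hAB) l.zero_le).mono
        (part_subset_part_succ ((G.omega l).symm hAB) hn)
    | n+2, hn =>
      exact ((ih n (by omega) hAB (by omega)).mono (part_subset_part_succ hAB (by omega))).mono
        (part_subset_part_succ ((G.omega l).symm hAB) hn)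

def IsSingletonUpTo (A : G.OmegaVert l) (p : ℕ) : Prop := ∀ n ≤ p, ∃ x, A.part n = {x}

noncomputable def depth (A : G.OmegaVert l) : ℕ := Nat.findGreatest A.IsSingletonUpTo l

lemma depth_le (A : G.OmegaVert l) : A.depth ≤ l := Nat.findGreatest_le l

lemma isSingletonUpTo_depth (A : G.OmegaVert l) : A.IsSingletonUpTo A.depth :=
  Nat.findGreatest_spec l.zero_le fun _ hn => (Nat.le_zero.1 hn) ▸ A.exists_part_zero_eq_singleton

lemma not_exists_part_depth_succ_eq_singleton (A : G.OmegaVert l) (h : A.depth < l) :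
    ¬ ∃ x, A.part (A.depth + 1) = {x} := fun hx =>
  Nat.findGreatest_is_greatest (Nat.lt_succ_self _) h fun n hn =>
    (Nat.le_succ_iff.1 hn).elim (A.isSingletonUpTo_depth n) (· ▸ hx)

lemma depth_le_depth_add_one (hAB : (G.omega l).Adj A B) : B.depth ≤ A.depth + 1 := by
  obtain h0 | hpos := B.depth.eq_zero_or_pos
  · omega
  have hBl := B.depth_le
  suffices A.IsSingletonUpTo (B.depth - 1) by
    have : B.depth - 1 ≤ A.depth := Nat.le_findGreatest (by omega) this
    omega
  intro n hn
  obtain ⟨x, hx⟩ := B.isSingletonUpTo_depth (n+1) (by omega)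
  exact ⟨x, (part_nonempty_of_adj hAB (by omega)).subset_singleton_iff.1
    (hx ▸ part_subset_part_succ hAB (by omega))⟩

lemma depth_eq_last_of_depth_eq (hG : G.SquareFree) (hAB : (G.omega l).Adj A B)
    (h : A.depth = B.depth) : A.depth = l := by
  by_contra hne
  have hlt : A.depth < l := lt_of_le_of_ne A.depth_le hne
  have hA := A.not_exists_part_depth_succ_eq_singleton hlt
  have hB := B.not_exists_part_depth_succ_eq_singleton (h ▸ hlt)
  rw [← h] at hB
  have singleton_of_subsingleton {C : G.OmegaVert l} {D : G.OmegaVert l}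
      (hCD : (G.omega l).Adj C D) (hs : (C.part (A.depth + 1)).Subsingleton) :
      ∃ x, C.part (A.depth + 1) = {x} :=
    Set.exists_eq_singleton_iff_nonempty_subsingleton.2 ⟨part_nonempty_of_adj hCD hlt, hs⟩
  rcases (show A.depth + 1 ≤ l from hlt).eq_or_lt with hl | hl
  · rcases hG _ _ (join_part_last hAB) with hs | hs
    · exact hA (singleton_of_subsingleton hAB (by rwa [hl]))
    · exact hB (singleton_of_subsingleton ((G.omega l).symm hAB) (by rwa [hl]))
  · rcases hG _ _ (B.join_part_succ hl) with hs | hs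
    · exact hB (singleton_of_subsingleton ((G.omega l).symm hAB) hs)
    · exact hA (singleton_of_subsingleton hAB (hs.anti (part_subset_part_succ hAB hl)))

noncomputable def elt (A : G.OmegaVert l) (n : ℕ) : G.V :=
  if h : ∃ x, A.part n = {x} then h.choose else A.exists_part_zero_eq_singleton.choose

lemma part_eq_singleton_elt (A : G.OmegaVert l) (hn : n ≤ A.depth) : A.part n = {A.elt n} := by
  have h := A.isSingletonUpTo_depth n hn
  rw [elt, dif_pos h]
  exact h.choose_spec

lemma elt_one_eq_elt_zero_of_adj (hAB : (G.omega l).Adj A B) (h : 1 ≤ A.depth) :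
    A.elt 1 = B.elt 0 := by
  have hmem := part_subset_part_succ ((G.omega l).symm hAB) (by have := A.depth_le; omega)
    ((B.part_eq_singleton_elt B.depth.zero_le).ge rfl)
  rw [A.part_eq_singleton_elt h] at hmem
  exact hmem.symm

lemma adj_elt_zero_elt_one (A : G.OmegaVert l) (h : 1 ≤ A.depth) : G.Adj (A.elt 0) (A.elt 1) :=
  A.join_part_succ (by have := A.depth_le; omega) _
    ((A.part_eq_singleton_elt A.depth.zero_le).ge rfl) _ ((A.part_eq_singleton_elt h).ge rfl)

noncomputable def toSubdivRaw (A : G.OmegaVert l) : G.SubdivRaw (2*l+1) :=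
  if h : A.depth = 0 then .inl (A.elt 0)
  else if A.depth % 2 = 0 then
    .inr ⟨(A.elt 0, A.elt 1, ⟨A.depth, by have := A.depth_le; omega⟩),
      A.adj_elt_zero_elt_one (by omega), by dsimp only; omega,
      by dsimp only; have := A.depth_le; omega⟩
  else
    .inr ⟨(A.elt 1, A.elt 0, ⟨A.depth, by have := A.depth_le; omega⟩),
      G.symm (A.adj_elt_zero_elt_one (by omega)), by dsimp only; omega,
      by dsimp only; have := A.depth_le; omega⟩

lemma subdivAdjRaw_toSubdivRaw_of_depth_eq_succ (hAB : (G.omega l).Adj A B)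
    (h : B.depth = A.depth + 1) : G.subdivAdjRaw (2*l+1) A.toSubdivRaw B.toSubdivRaw := by
  have hBl := B.depth_le
  have hBA : B.elt 1 = A.elt 0 := elt_one_eq_elt_zero_of_adj ((G.omega l).symm hAB) (by omega)
  have hB0 : B.depth ≠ 0 := by omega
  by_cases hA0 : A.depth = 0
  · have hBodd : ¬ B.depth % 2 = 0 := by omega
    rw [toSubdivRaw, dif_pos hA0, toSubdivRaw, dif_neg hB0, if_neg hBodd]
    exact Or.inl ⟨hBA, by dsimp only; omega⟩
  have hAB' : A.elt 1 = B.elt 0 := elt_one_eq_elt_zero_of_adj hAB (by omega)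
  by_cases hAeven : A.depth % 2 = 0
  · rw [toSubdivRaw, dif_neg hA0, if_pos hAeven, toSubdivRaw, dif_neg hB0, if_neg (by omega)]
    exact Or.inl ⟨hBA.symm, hAB', Or.inl (by dsimp only; omega)⟩
  · rw [toSubdivRaw, dif_neg hA0, if_neg hAeven, toSubdivRaw, dif_neg hB0, if_pos (by omega)]
    exact Or.inl ⟨hAB', hBA.symm, Or.inl (by dsimp only; omega)⟩

lemma subdivAdjRaw_toSubdivRaw_of_depth_eq_last (hAB : (G.omega l).Adj A B) (hA : A.depth = l)
    (hB : B.depth = l) : G.subdivAdjRaw (2*l+1) A.toSubdivRaw B.toSubdivRaw := by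
  by_cases hl : l = 0
  · subst hl
    rw [toSubdivRaw, dif_pos hA, toSubdivRaw, dif_pos hB]
    exact ⟨rfl, join_part_last hAB _ ((A.part_eq_singleton_elt (by omega)).ge rfl) _
      ((B.part_eq_singleton_elt (by omega)).ge rfl)⟩
  have hAB' : A.elt 1 = B.elt 0 := elt_one_eq_elt_zero_of_adj hAB (by omega)
  have hBA : B.elt 1 = A.elt 0 := elt_one_eq_elt_zero_of_adj ((G.omega l).symm hAB) (by omega)
  by_cases hleven : l % 2 = 0
  · rw [toSubdivRaw, dif_neg (by omega), if_pos (by omega), toSubdivRaw, dif_neg (by omega),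
      if_pos (by omega)]
    exact Or.inr ⟨hBA.symm, hAB', Or.inr (by dsimp only; omega)⟩
  · rw [toSubdivRaw, dif_neg (by omega), if_neg (by omega), toSubdivRaw, dif_neg (by omega),
      if_neg (by omega)]
    exact Or.inr ⟨hAB', hBA.symm, Or.inr (by dsimp only; omega)⟩

end FinGraph.OmegaVert

theorem FinGraph.omega_hom_subdiv_of_squareFree {G : FinGraph} (hG : G.SquareFree) (l : ℕ) :
    (G.omega l).Hom (G.subdiv (2*l+1)) := by
  refine ⟨fun A => Quot.mk _ A.toSubdivRaw, fun {A B} hAB => ⟨_, _, rfl, rfl, ?_⟩⟩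
  have hBA := OmegaVert.depth_le_depth_add_one hAB
  have hAB' := OmegaVert.depth_le_depth_add_one ((G.omega l).symm hAB)
  by_cases h : A.depth = B.depth
  · have hA := OmegaVert.depth_eq_last_of_depth_eq hG hAB h
    exact Or.inl (OmegaVert.subdivAdjRaw_toSubdivRaw_of_depth_eq_last hAB hA (h ▸ hA))
  · rcases (by omega : B.depth = A.depth + 1 ∨ A.depth = B.depth + 1) with h | h
    · exact Or.inl (OmegaVert.subdivAdjRaw_toSubdivRaw_of_depth_eq_succ hAB h)
    · exact Or.inr (OmegaVert.subdivAdjRaw_toSubdivRaw_of_depth_eq_succ ((G.omega l).symm hAB) h)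

/-- if `G` is square-free (`A ⊴ B` implies `|A| ≤ 1` or `|B| ≤ 1`)
then `Λ_{2ℓ+1}(G)` and `Ω_{2ℓ+1}(G)` are homomorphically equivalent. -/
theorem squarefree_subdiv_equiv_omega (G : FinGraph)
    (hsf : ∀ A B : Set G.V, G.Join A B → A.Subsingleton ∨ B.Subsingleton)
    (l : ℕ) :
    (G.subdiv (2*l+1)).HomEquiv (G.omega l) :=
  ⟨G.subdiv_hom_omega l, G.omega_hom_subdiv_of_squareFree hsf l⟩
end
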